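/- Let ρ_f ∈ (0,1), c_u > 0, α_w > 0, and suppose V(x) = xᵀPx with P ≤ c_u·I. If V(x⁺) ≤ ρ_f²·α_w and ‖w‖ ≤ ŵ_N with ŵ_N ≤ (1 − ρ_f)·√(α_w/c_u), then V(x⁺ + w) ≤ α_w. -/

import Mathlib

open Matrix

/-- Quadratic form `xᵀ M x`. -/
noncomputable def qf {n : ℕ} (M : Matrix (Fin n) (Fin n) ℝ) (x : Fin n → ℝ) : ℝ :=
  x ⬝ᵥ M.mulVec x

/-- Euclidean norm of a vector in `ℝⁿ`. -/
noncomputable def eunorm {n : ℕ} (x : Fin n → ℝ) : ℝ :=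
  Real.sqrt (x ⬝ᵥ x)

lemma eunorm_eq_norm {n : ℕ} (x : Fin n → ℝ) :
    eunorm x = ‖(WithLp.equiv 2 (Fin n → ℝ)).symm x‖ := by
  rw [eunorm, EuclideanSpace.norm_eq]
  congr 1
  simp [dotProduct, Real.norm_eq_abs, sq_abs, sq]

lemma eunorm_nonneg {n : ℕ} (x : Fin n → ℝ) : 0 ≤ eunorm x := Real.sqrt_nonneg _

lemma eunorm_add_le {n : ℕ} (x y : Fin n → ℝ) :
    eunorm (x + y) ≤ eunorm x + eunorm y := by
  simp only [eunorm_eq_norm]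
  rw [show (WithLp.equiv 2 (Fin n → ℝ)).symm (x + y)
      = (WithLp.equiv 2 (Fin n → ℝ)).symm x + (WithLp.equiv 2 (Fin n → ℝ)).symm y from rfl]
  exact norm_add_le _ _

lemma sq_eunorm {n : ℕ} (x : Fin n → ℝ) : eunorm x ^ 2 = x ⬝ᵥ x := by
  rw [eunorm, Real.sq_sqrt]
  exact Finset.sum_nonneg fun i _ => mul_self_nonneg _

open scoped MatrixOrder in
noncomputable def Matrix.PosSemidef.sqrt {n : ℕ} {P : Matrix (Fin n) (Fin n) ℝ}
    (_hP : P.PosSemidef) : Matrix (Fin n) (Fin n) ℝ := CFC.sqrt P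

open scoped MatrixOrder in
lemma Matrix.PosSemidef.posSemidef_sqrt {n : ℕ} {P : Matrix (Fin n) (Fin n) ℝ}
    (hP : P.PosSemidef) : hP.sqrt.PosSemidef :=
  Matrix.nonneg_iff_posSemidef.mp (CFC.sqrt_nonneg P)

open scoped MatrixOrder in
lemma Matrix.PosSemidef.sqrt_mul_self {n : ℕ} {P : Matrix (Fin n) (Fin n) ℝ}
    (hP : P.PosSemidef) : hP.sqrt * hP.sqrt = P :=
  CFC.sqrt_mul_sqrt_self P (Matrix.nonneg_iff_posSemidef.mpr hP)

lemma qf_eq_sq {n : ℕ} {P : Matrix (Fin n) (Fin n) ℝ} (hP : P.PosSemidef)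
    (x : Fin n → ℝ) : qf P x = eunorm (hP.sqrt *ᵥ x) ^ 2 := by
  have hS : (hP.sqrt)ᵀ = hP.sqrt := hP.posSemidef_sqrt.isHermitian
  have hSS : hP.sqrt * hP.sqrt = P := hP.sqrt_mul_self
  rw [sq_eunorm, qf]
  calc x ⬝ᵥ P *ᵥ x = x ⬝ᵥ (hP.sqrt * hP.sqrt) *ᵥ x := by rw [hSS]
    _ = hP.sqrt *ᵥ x ⬝ᵥ hP.sqrt *ᵥ x := by
        rw [← mulVec_mulVec, dotProduct_mulVec]
        nth_rewrite 1 [← hS]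
        rw [vecMul_transpose]

theorem stmt8 {n : ℕ}
    (P : Matrix (Fin n) (Fin n) ℝ) (ρf c_u αw wN : ℝ)
    (hP : P.PosSemidef)
    (hPu : (c_u • (1 : Matrix (Fin n) (Fin n) ℝ) - P).PosSemidef)
    (hρ0 : 0 < ρf) (hρ1 : ρf < 1) (hcu : 0 < c_u) (hαw : 0 < αw)
    (xp w : Fin n → ℝ)
    (hV : qf P xp ≤ ρf ^ 2 * αw)
    (hw : eunorm w ≤ wN)
    (hwN : wN ≤ (1 - ρf) * Real.sqrt (αw / c_u)) :
    qf P (xp + w) ≤ αw := by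
  -- qf P w ≤ c_u * (w ⬝ᵥ w)
  have hqw : qf P w ≤ c_u * (w ⬝ᵥ w) := by
    have h0 := hPu.dotProduct_mulVec_nonneg w
    simp only [RCLike.re_to_real, star_trivial] at h0
    rw [sub_mulVec, dotProduct_sub, sub_nonneg, smul_mulVec, one_mulVec,
      dotProduct_smul] at h0
    simpa [qf, smul_eq_mul] using h0
  have key : eunorm (hP.sqrt *ᵥ (xp + w)) ≤ Real.sqrt αw := by
    have hsplit : hP.sqrt *ᵥ (xp + w) = hP.sqrt *ᵥ xp + hP.sqrt *ᵥ w := mulVec_add _ _ _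
    have h1 : eunorm (hP.sqrt *ᵥ xp) ≤ ρf * Real.sqrt αw := by
      have h2 : eunorm (hP.sqrt *ᵥ xp) ^ 2 ≤ (ρf * Real.sqrt αw) ^ 2 := by
        rw [mul_pow, Real.sq_sqrt hαw.le]
        rw [← qf_eq_sq hP xp]; exact hV
      nlinarith [eunorm_nonneg (hP.sqrt *ᵥ xp), mul_nonneg hρ0.le (Real.sqrt_nonneg αw)]
    have h2 : eunorm (hP.sqrt *ᵥ w) ≤ (1 - ρf) * Real.sqrt αw := by
      have hb : eunorm (hP.sqrt *ᵥ w) ^ 2 ≤ (Real.sqrt c_u * wN) ^ 2 := by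
        rw [← qf_eq_sq hP w, mul_pow, Real.sq_sqrt hcu.le]
        refine hqw.trans ?_
        have hwn : 0 ≤ eunorm w := eunorm_nonneg w
        have hsq := sq_eunorm w
        have hww : w ⬝ᵥ w ≤ wN ^ 2 := by nlinarith [hw]
        exact mul_le_mul_of_nonneg_left hww hcu.le
      have h3 : eunorm (hP.sqrt *ᵥ w) ≤ Real.sqrt c_u * wN := by
        have hwN0 : 0 ≤ wN := (eunorm_nonneg w).trans hw
        nlinarith [eunorm_nonneg (hP.sqrt *ᵥ w), mul_nonneg (Real.sqrt_nonneg c_u) hwN0]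
      refine h3.trans ?_
      have heq : Real.sqrt c_u * ((1 - ρf) * Real.sqrt (αw / c_u)) = (1 - ρf) * Real.sqrt αw := by
        rw [mul_left_comm, ← Real.sqrt_mul hcu.le, mul_div_cancel₀ _ hcu.ne']
      calc Real.sqrt c_u * wN ≤ Real.sqrt c_u * ((1 - ρf) * Real.sqrt (αw / c_u)) :=
            mul_le_mul_of_nonneg_left hwN (Real.sqrt_nonneg c_u)
        _ = (1 - ρf) * Real.sqrt αw := heq
    calc eunorm (hP.sqrt *ᵥ (xp + w)) ≤ eunorm (hP.sqrt *ᵥ xp) + eunorm (hP.sqrt *ᵥ w) := by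
          rw [hsplit]; exact eunorm_add_le _ _
      _ ≤ ρf * Real.sqrt αw + (1 - ρf) * Real.sqrt αw := add_le_add h1 h2
      _ = Real.sqrt αw := by ring
  rw [qf_eq_sq hP]
  calc eunorm (hP.sqrt *ᵥ (xp + w)) ^ 2 ≤ Real.sqrt αw ^ 2 := by
        nlinarith [eunorm_nonneg (hP.sqrt *ᵥ (xp + w)), Real.sqrt_nonneg αw]
    _ = αw := Real.sq_sqrt hαw.le
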